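/- arXiv:1205.3297 — 7 statements merged into one kernel-verified Lean document; each statement's English description precedes it below -/
import Mathlib

section
/- In the two-element lattice B₂ = {0,1}, there are exactly three admissible operation sequences, namely: (1) the sequence where every fᵢ is constantly 0; (2) the sequence with g₁(1)=1 and gᵢ constantly 0 for i ≥ 2; (3) the sequence where hₙ(α₁,...,αₙ) = α₁ ∧ ... ∧ αₙ. -/
/-- An operation sequence on a lattice `L`: `f n` is the `(n+1)`-ary operation,
so `f n` corresponds to the paper's `f_{n+1}`. -/
def OpSeq (L : Type) : Type := ∀ n : ℕ, (Fin (n + 1) → L) → L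

/-- Admissibility: (HC1), (HC2), (HC3), (HC4), (HC7), (HC8). -/
def IsAdmissible {L : Type} [CompleteLattice L] (f : OpSeq L) : Prop :=
  -- (HC1)
  (∀ n (α : Fin (n + 1) → L) (k : Fin (n + 1)), f n α ≤ α k) ∧
  -- (HC2) monotonicity
  (∀ n (α β : Fin (n + 1) → L), α ≤ β → f n α ≤ f n β) ∧
  -- (HC3)
  (∀ n (α : Fin (n + 2) → L), f (n + 1) α ≤ f n (fun i => α i.succ)) ∧
  -- (HC4) symmetry
  (∀ n (α : Fin (n + 1) → L) (π : Equiv.Perm (Fin (n + 1))), f n (α ∘ π) = f n α) ∧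
  -- (HC7) join distributivity in each argument
  (∀ n (i : Fin (n + 1)) (α : Fin (n + 1) → L) (S : Set L),
      f n (Function.update α i (sSup S)) = ⨆ b ∈ S, f n (Function.update α i b)) ∧
  -- (HC8)
  (∀ n k (hkn : k ≤ n) (α : Fin (n + 1) → L),
      f k (fun i : Fin (k + 1) =>
        if hi : (i : ℕ) < k then α ⟨i.1, by omega⟩
        else f (n - k) (fun j : Fin (n - k + 1) => α ⟨k + j.1, by have := j.2; omega⟩)) ≤
      f n α)

/-- `(δ, ε)` is a splitting pair. -/
def IsSplittingPair {L : Type} [Lattice L] [BoundedOrder L] (δ ε : L) : Prop :=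
  δ < ⊤ ∧ ⊥ < ε ∧ ∀ α : L, ε ≤ α ∨ α ≤ δ

/-- `L` splits. -/
def Splits (L : Type) [Lattice L] [BoundedOrder L] : Prop :=
  ∃ δ ε : L, IsSplittingPair δ ε

/-- `L` splits strongly. -/
def SplitsStrongly (L : Type) [Lattice L] [BoundedOrder L] : Prop :=
  ∃ δ ε : L, IsSplittingPair δ ε ∧ ε ≤ δ

def seqF : OpSeq Prop := fun _ _ => ⊥

def seqG : OpSeq Prop := fun n α => if n = 0 then α 0 else ⊥

def seqH : OpSeq Prop := fun _ α => ⨅ i, α i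

lemma admF : IsAdmissible seqF := by
  refine ⟨?_, ?_, ?_, ?_, ?_, ?_⟩ <;> intros <;> simp [seqF]

lemma admG : IsAdmissible seqG := by
  refine ⟨?_, ?_, ?_, ?_, ?_, ?_⟩
  · intro n α k
    cases n with
    | zero => rw [Fin.fin_one_eq_zero k]; simp [seqG]
    | succ n => simp [seqG]
  · intro n α β h
    cases n with
    | zero => simp only [seqG, if_pos rfl]; exact h 0
    | succ n => simp [seqG]
  · intro n α; simp [seqG]
  · intro n α π
    cases n with
    | zero => simp only [seqG, if_pos rfl, Function.comp]; rw [Fin.fin_one_eq_zero (π 0)]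
    | succ n => simp [seqG]
  · intro n i α S
    cases n with
    | zero =>
      rw [Fin.fin_one_eq_zero i]
      simp only [seqG, if_pos rfl, Function.update_self]
      exact sSup_eq_iSup
    | succ n => simp [seqG]
  · intro n k hkn α
    cases k with
    | zero =>
      simp only [seqG, Nat.sub_zero, Fin.val_zero, Nat.not_lt_zero, dite_false, if_true,
        reduceIte]
      by_cases hn : n = 0
      · rw [if_pos hn, if_pos hn]
        exact le_of_eq (congrArg α (Fin.ext (by simp)))
      · rw [if_neg hn, if_neg hn]
    | succ k => simp [seqG]

lemma admH : IsAdmissible seqH := by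
  refine ⟨?_, ?_, ?_, ?_, ?_, ?_⟩
  · intro n α k; exact iInf_le _ k
  · intro n α β h; exact iInf_mono fun i => h i
  · intro n α; exact le_iInf fun i => iInf_le _ i.succ
  · intro n α π; exact π.iInf_comp (g := α)
  · intro n i α S
    simp only [seqH, iInf_Prop_eq, sSup_Prop_eq, iSup_Prop_eq, exists_prop]
    apply propext
    constructor
    · intro h
      have hi := h i
      rw [Function.update_self] at hi
      obtain ⟨b, hbS, hb⟩ := hi
      refine ⟨b, hbS, fun j => ?_⟩
      rcases eq_or_ne j i with rfl | hne
      · rwa [Function.update_self]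
      · rw [Function.update_of_ne hne]
        have := h j
        rwa [Function.update_of_ne hne] at this
    · rintro ⟨b, hbS, hb⟩ j
      rcases eq_or_ne j i with rfl | hne
      · rw [Function.update_self]
        have := hb j
        rw [Function.update_self] at this
        exact ⟨b, hbS, this⟩
      · have := hb j
        rw [Function.update_of_ne hne] at this
        rw [Function.update_of_ne hne]
        exact this
  · intro n k hkn α
    simp only [seqH, iInf_Prop_eq]
    intro H i
    by_cases hik : (i : ℕ) < k
    · have := H ⟨i.1, by omega⟩
      rw [dif_pos hik] at this
      exact this
    · have := H ⟨k, by omega⟩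
      rw [dif_neg (Nat.lt_irrefl k)] at this
      have h2 := this ⟨i.1 - k, by omega⟩
      have e : i = (⟨k + ((i : ℕ) - k), by omega⟩ : Fin (n + 1)) := Fin.ext (show (i : ℕ) = k + ((i : ℕ) - k) by omega)
      rw [e]
      exact h2

lemma key_lemma (s : OpSeq Prop) (h1 : ∀ n (α : Fin (n + 1) → Prop) (k : Fin (n + 1)), s n α ≤ α k)
    (n : ℕ) (α : Fin (n + 1) → Prop) :
    s n α = ((∀ i, α i) ∧ s n (fun _ => True)) := by
  by_cases h : ∀ i, α i
  · have hα : α = fun _ => True := funext fun i => eq_true (h i)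
    rw [hα]
    exact propext ⟨fun hs => ⟨fun _ => trivial, hs⟩, fun hs => hs.2⟩
  · push_neg at h
    obtain ⟨i, hi⟩ := h
    exact propext ⟨fun hs => absurd (h1 n α i hs) hi, fun hs => absurd (hs.1 i) hi⟩

theorem B2_exactly_three_admissible_sequences :
    (∀ s : OpSeq Prop, IsAdmissible s ↔ s = seqF ∨ s = seqG ∨ s = seqH) ∧
    seqF ≠ seqG ∧ seqF ≠ seqH ∧ seqG ≠ seqH := by
  refine ⟨fun s => ⟨fun hs => ?_, fun hs => ?_⟩, ?_, ?_, ?_⟩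
  · obtain ⟨h1, h2, h3, h4, h7, h8⟩ := hs
    set a : ℕ → Prop := fun n => s n (fun _ => True) with ha
    have key : ∀ n (α : Fin (n + 1) → Prop), s n α = ((∀ i, α i) ∧ a n) :=
      key_lemma s h1
    have hdec : ∀ n, a (n + 1) → a n := fun n h => h3 n (fun _ => True) h
    have hanti : ∀ d k, a (k + d) → a k := by
      intro d
      induction d with
      | zero => exact fun k => id
      | succ d ih => exact fun k h => ih k (hdec (k + d) h)
    have hmul : ∀ n k, k ≤ n → a k → a (n - k) → a n := by
      intro n k hkn hak hank
      refine h8 n k hkn (fun _ => True) ?_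
      rw [key k]
      refine ⟨fun i => ?_, hak⟩
      split
      · trivial
      · exact hank
    by_cases ha1 : a 1
    · have ha0 : a 0 := hdec 0 ha1
      have hall : ∀ n, a n := by
        intro n
        induction n with
        | zero => exact ha0
        | succ n ih =>
          refine hmul (n + 1) n (Nat.le_succ n) ih ?_
          rw [show n + 1 - n = 1 by omega]
          exact ha1
      right; right
      funext n α
      rw [key n α, seqH, iInf_Prop_eq]
      exact propext ⟨fun h => h.1, fun h => ⟨h, hall n⟩⟩
    · by_cases ha0 : a 0
      · right; left
        funext n α
        rw [key n α]
        cases n with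
        | zero =>
          simp only [seqG, if_pos rfl]
          exact propext ⟨fun h => h.1 0, fun h =>
            ⟨fun i => by rw [Fin.fin_one_eq_zero i]; exact h, ha0⟩⟩
        | succ m =>
          have hm : ¬ a (m + 1) := fun h => ha1 (hanti m 1 (by rw [Nat.add_comm]; exact h))
          simp only [seqG, Nat.succ_ne_zero, if_false]
          exact propext ⟨fun h => absurd h.2 hm, fun h => h.elim⟩
      · left
        funext n α
        rw [key n α]
        have hn : ¬ a n := fun h => ha0 (hanti n 0 (by rw [Nat.zero_add]; exact h))
        exact propext ⟨fun h => absurd h.2 hn, fun h => h.elim⟩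
  · rcases hs with rfl | rfl | rfl
    · exact admF
    · exact admG
    · exact admH
  · intro h
    have := congrFun (congrFun h 0) (fun _ => True)
    simp [seqF, seqG] at this
  · intro h
    have := congrFun (congrFun h 0) (fun _ => True)
    simp [seqF, seqH] at this
  · intro h
    have := congrFun (congrFun h 1) (fun _ => True)
    simp [seqG, seqH] at this
end

section
/- Let L be a modular lattice of finite height that does not split strongly. Then there exist n ∈ ℕ₀ and a lattice M that does not split such that L is isomorphic to M × (B₂)ⁿ, where B₂ is the two-element lattice. -/
/-!
A splitting pair `(δ, ε)` of a lattice that does not split strongly is complementary: otherwise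
`(δ ⊔ ε, ε)` or `(δ, δ ⊓ ε)` would be a strong splitting pair. By modularity, `α ↦ (α ⊓ δ, ε ≤ α)`
is then an isomorphism `L ≃o Iic δ × Prop`. A strong splitting pair of `Iic δ` would give one of
`Iic δ × Prop`, so `Iic δ` does not split strongly either, and it has smaller height since `δ < ⊤`.
Induction on the height ends at a lattice that does not split.
-/

def OrderIso.prodCongr {α β γ δ : Type*} [LE α] [LE β] [LE γ] [LE δ]
    (e₁ : α ≃o β) (e₂ : γ ≃o δ) : α × γ ≃o β × δ where
  toEquiv := e₁.toEquiv.prodCongr e₂.toEquiv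
  map_rel_iff' := by simp [Prod.le_def]

def OrderIso.prodFinZeroArrow (α β : Type*) [LE α] [LE β] : α ≃o α × (Fin 0 → β) where
  toEquiv := (Equiv.prodUnique α (Fin 0 → β)).symm
  map_rel_iff' := by simp [Prod.le_def, Pi.le_def]

def OrderIso.prodProdFinSuccArrow (α β : Type*) [LE α] [LE β] (n : ℕ) :
    (α × (Fin n → β)) × β ≃o α × (Fin (n + 1) → β) :=
  (prodAssoc _ _ _).trans ((refl α).prodCongr (prodComm.trans (Fin.consOrderIso fun _ => β)))

theorem List.length_le_of_isChain_Iic {α : Type*} [Preorder α] {δ b : α} (hδb : δ < b) {N : ℕ}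
    (hN : ∀ c : List α, c.IsChain (· < ·) → c.length ≤ N + 1)
    (c : List (Set.Iic δ)) (hc : c.IsChain (· < ·)) : c.length ≤ N := by
  have hchain : (c.map Subtype.val ++ [b]).IsChain (· < ·) := by
    refine List.isChain_append.2 ⟨List.isChain_map _ |>.2 hc, List.isChain_singleton _, ?_⟩
    intro x hx y hy
    obtain ⟨⟨x, hxδ⟩, -, rfl⟩ := List.mem_map.1 (List.mem_of_mem_getLast? hx)
    obtain rfl : y = b := by simpa using hy.symm
    exact lt_of_le_of_lt hxδ hδb
  simpa using hN _ hchain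

section Splitting

variable {L K : Type} [Lattice L] [BoundedOrder L] [Lattice K] [BoundedOrder K] {δ ε : L}

theorem IsSplittingPair.isCompl (hns : ¬ SplitsStrongly L) (h : IsSplittingPair δ ε) :
    IsCompl δ ε := by
  obtain ⟨hδ, hε, hsplit⟩ := h
  refine IsCompl.of_eq ?_ ?_
  · by_contra hne
    refine hns ⟨δ, δ ⊓ ε, ⟨hδ, bot_lt_iff_ne_bot.2 hne, fun α => ?_⟩, inf_le_left⟩
    exact (hsplit α).imp (inf_le_right.trans ·) id
  · by_contra hne
    refine hns ⟨δ ⊔ ε, ε, ⟨lt_top_iff_ne_top.2 hne, hε, fun α => ?_⟩, le_sup_right⟩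
    exact (hsplit α).imp id (·.trans le_sup_left)

noncomputable def IsSplittingPair.orderIsoIicProd [IsModularLattice L]
    (h : IsSplittingPair δ ε) (hc : IsCompl δ ε) : L ≃o Set.Iic δ × Prop := by
  have hεδ : ¬ ε ≤ δ := fun hle => h.2.1.ne' (hc.disjoint.eq_bot_of_ge hle)
  have inf_sup_eq : ∀ α, ε ≤ α → α ⊓ δ ⊔ ε = α := fun α hα => by
    rw [inf_sup_assoc_of_le _ hα, hc.sup_eq_top, inf_top_eq]
  refine .ofSurjective (.ofMapLEIff (fun α => (⟨α ⊓ δ, inf_le_right⟩, ε ≤ α)) fun α α' => ?_) ?_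
  · refine ⟨fun ⟨hinf, himp⟩ => ?_, fun hle => ⟨inf_le_inf_right δ hle, (·.trans hle)⟩⟩
    change α ⊓ δ ≤ α' ⊓ δ at hinf
    rcases h.2.2 α with hα | hα
    · rw [← inf_sup_eq α hα, ← inf_sup_eq α' (himp hα)]
      exact sup_le_sup_right hinf ε
    · exact (inf_eq_left.2 hα).symm.le.trans (hinf.trans inf_le_left)
  · rintro ⟨⟨β, hβ⟩, p⟩
    by_cases hp : p
    · refine ⟨β ⊔ ε, Prod.ext (Subtype.ext ?_) (propext ⟨fun _ => hp, fun _ => le_sup_right⟩)⟩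
      change (β ⊔ ε) ⊓ δ = β
      rw [sup_inf_assoc_of_le _ hβ, hc.symm.inf_eq_bot, sup_bot_eq]
    · refine ⟨β, Prod.ext (Subtype.ext (inf_eq_left.2 hβ)) (propext ⟨?_, hp.elim⟩)⟩
      exact fun hεβ => (hεδ (hεβ.trans hβ)).elim

theorem SplitsStrongly.prod_left {P : Type} [Lattice P] [BoundedOrder P] (h : SplitsStrongly K) :
    SplitsStrongly (K × P) := by
  obtain ⟨δ, ε, ⟨hδ, hε, hsplit⟩, hεδ⟩ := h
  refine ⟨(δ, ⊤), (ε, ⊥), ⟨?_, ?_, fun α => ?_⟩, ⟨hεδ, bot_le⟩⟩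
  · exact Prod.mk_lt_mk_iff_left.2 hδ
  · exact Prod.mk_lt_mk_iff_left.2 hε
  · exact (hsplit α.1).imp (⟨·, bot_le⟩) (⟨·, le_top⟩)

theorem SplitsStrongly.of_orderIso (e : L ≃o K) (h : SplitsStrongly K) : SplitsStrongly L := by
  obtain ⟨δ, ε, ⟨hδ, hε, hsplit⟩, hεδ⟩ := h
  refine ⟨e.symm δ, e.symm ε, ⟨?_, ?_, fun α => ?_⟩, e.symm.monotone hεδ⟩
  · simpa using e.symm.strictMono hδ
  · simpa using e.symm.strictMono hε
  · simpa [← e.le_symm_apply, ← e.symm_apply_le] using hsplit (e α)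

end Splitting

theorem exists_orderIso_prod_not_splits_of_height_le (N : ℕ) :
    ∀ (L : Type) [Lattice L] [BoundedOrder L] [IsModularLattice L],
      (∀ c : List L, c.IsChain (· < ·) → c.length ≤ N) → ¬ SplitsStrongly L →
      ∃ (M : Type) (_ : Lattice M) (_ : BoundedOrder M) (n : ℕ),
        ¬ Splits M ∧ Nonempty (L ≃o M × (Fin n → Prop)) := by
  induction N with
  | zero =>
    intro L _ _ _ hN _
    simpa using hN [⊥] (List.isChain_singleton _)
  | succ N ih =>
    intro L _ _ _ hN hns
    by_cases hsplits : Splits L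
    · obtain ⟨δ, ε, h⟩ := hsplits
      let e := h.orderIsoIicProd (h.isCompl hns)
      have hnsδ : ¬ SplitsStrongly (Set.Iic δ) := fun hδ => hns (hδ.prod_left.of_orderIso e)
      obtain ⟨M, _, _, n, hM, ⟨e'⟩⟩ :=
        ih (Set.Iic δ) (List.length_le_of_isChain_Iic h.1 hN) hnsδ
      exact ⟨M, _, _, n + 1, hM,
        ⟨e.trans ((e'.prodCongr (.refl Prop)).trans (.prodProdFinSuccArrow M Prop n))⟩⟩
    · exact ⟨L, _, _, 0, hsplits, ⟨.prodFinZeroArrow L Prop⟩⟩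

theorem modular_finite_height_not_strongly_splitting
    (L : Type) [Lattice L] [BoundedOrder L] [IsModularLattice L]
    (hheight : ∃ N : ℕ, ∀ c : List L, c.Chain' (· < ·) → c.length ≤ N)
    (hns : ¬ SplitsStrongly L) :
    ∃ (M : Type) (_ : Lattice M) (_ : BoundedOrder M) (n : ℕ),
      ¬ Splits M ∧ Nonempty (L ≃o M × (Fin n → Prop)) := by
  obtain ⟨N, hN⟩ := hheight
  exact exists_orderIso_prod_not_splits_of_height_le N L hN hns
end

section
/- Let m ∈ ℕ and let 𝓛 be the set of upward closed subsets of ℕ₀ᵐ, partially ordered by inclusion. Then (𝓛, ⊆) has no infinite antichain and no infinite strictly ascending chain. -/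
/-!
In the order of `UpperSet`, `U ≤ V` means `V ⊆ U`, so both claims say that `UpperSet (Fin m → ℕ)`
is a well-quasi-order. An upper set of `ℕ × β` is the antitone sequence of its slices, a sequence
of upper sets of `β`. If those are well-quasi-ordered, the sequence is eventually constant, so it is
encoded by its limit together with the finite list of the terms before it, and Higman's lemma
makes such sequences well-quasi-ordered. Induction on `m` finishes the proof.
-/

theorem List.SublistForall₂.exists_getElem_rel {α β : Type*} {R : α → β → Prop}
    {l₁ : List α} {l₂ : List β} (h : List.SublistForall₂ R l₁ l₂) :
    ∀ k (hk : k < l₁.length), ∃ p, ∃ hp : p < l₂.length, k ≤ p ∧ R l₁[k] l₂[p] := by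
  induction h with
  | nil => intro k hk; simp at hk
  | @cons a₁ a₂ l₁ l₂ hr _ ih =>
    rintro (_ | k) hk
    · exact ⟨0, by simp, le_rfl, hr⟩
    · obtain ⟨p, hp, hkp, hrel⟩ := ih k (by simpa using hk)
      exact ⟨p + 1, by simpa using hp, by omega, hrel⟩
  | cons_right _ ih =>
    intro k hk
    obtain ⟨p, hp, hkp, hrel⟩ := ih k hk
    exact ⟨p + 1, by simpa using hp, by omega, hrel⟩

theorem wellQuasiOrdered_sublistForall₂ {α : Type*} [Preorder α] [WellQuasiOrderedLE α] :
    WellQuasiOrdered (List.SublistForall₂ (α := α) (· ≤ ·)) := fun f =>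
  ((Set.isPWO_univ_iff.2 ‹_›).partiallyWellOrderedOn_sublistForall₂ (· ≤ ·)).exists_lt
    (f := f) fun _ _ _ => Set.mem_univ _

instance wellQuasiOrderedLE_antitone_nat {α : Type*} [PartialOrder α] [WellQuasiOrderedLE α] :
    WellQuasiOrderedLE {f : ℕ → α // Antitone f} := by
  refine ⟨fun F => ?_⟩
  choose N hN using fun n => WellFoundedLT.antitone_chain_condition (F n).2
  have limit_le : ∀ n k, (F n).1 (N n) ≤ (F n).1 k := by
    intro n k
    rcases le_total (N n) k with h | h
    · exact (hN n k h).le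
    · exact (F n).2 h
  obtain ⟨i, j, hij, hlimit, hprefix⟩ :=
    (wellQuasiOrdered_le.prod wellQuasiOrdered_sublistForall₂)
      fun n => ((F n).1 (N n), (List.range (N n)).map (F n).1)
  refine ⟨i, j, hij, fun k => ?_⟩
  rcases lt_or_ge k (N i) with hk | hk
  · -- the embedding of prefixes only moves indices to the right, which `F j` being antitone absorbs
    obtain ⟨p, _, hkp, hle⟩ := hprefix.exists_getElem_rel k (by simpa using hk)
    simp only [List.getElem_map, List.getElem_range] at hle
    exact hle.trans ((F j).2 hkp)
  · rw [← hN i k hk]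
    exact hlimit.trans (limit_le j k)

def UpperSet.sliceOrderIso (β : Type*) [Preorder β] :
    UpperSet (ℕ × β) ≃o {f : ℕ → UpperSet β // Antitone f} where
  toFun U := ⟨fun k => ⟨{b | (k, b) ∈ U}, fun _ _ hab => U.upper (Prod.mk_le_mk.2 ⟨le_rfl, hab⟩)⟩,
    fun _ _ hkl _ => U.upper (Prod.mk_le_mk.2 ⟨hkl, le_rfl⟩)⟩
  invFun f := ⟨{p | p.2 ∈ f.1 p.1}, fun _ _ hpq hp => f.2 hpq.1 ((f.1 _).upper hpq.2 hp)⟩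
  left_inv _ := rfl
  right_inv _ := rfl
  map_rel_iff' := ⟨fun h p hp => h p.1 hp, fun h _ _ hb => h hb⟩

instance UpperSet.wellQuasiOrderedLE_of_finite {α : Type*} [Preorder α] [Finite α] :
    WellQuasiOrderedLE (UpperSet α) :=
  have : Finite (UpperSet α) := Finite.of_injective _ SetLike.coe_injective
  Finite.to_wellQuasiOrderedLE

instance UpperSet.wellQuasiOrderedLE_fin_to_nat (m : ℕ) :
    WellQuasiOrderedLE (UpperSet (Fin m → ℕ)) := by
  induction m with
  | zero => infer_instance
  | succ m ih =>
    rw [← (UpperSet.map (Fin.consOrderIso fun _ => ℕ)).wellQuasiOrderedLE_iff,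
      (UpperSet.sliceOrderIso _).wellQuasiOrderedLE_iff]
    infer_instance

theorem upperSets_no_infinite_antichain_no_infinite_ascending_chain (m : ℕ) :
    (∀ C : Set (Set (Fin m → ℕ)), (∀ U ∈ C, IsUpperSet U) →
      IsAntichain (· ⊆ ·) C → C.Finite) ∧
    ¬ ∃ f : ℕ → Set (Fin m → ℕ), (∀ n, IsUpperSet (f n)) ∧ StrictMono f := by
  constructor
  · intro C hC hC_anti
    have hanti : IsAntichain (· ≤ ·) {U : UpperSet (Fin m → ℕ) | (U : Set _) ∈ C} :=
      fun U hU V hV hne => hC_anti hV hU fun h => hne (SetLike.coe_injective h.symm)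
    refine (WellQuasiOrderedLE.finite_of_isAntichain hanti).image SetLike.coe |>.subset ?_
    exact fun s hs => ⟨⟨s, hC s hs⟩, hs, rfl⟩
  · rintro ⟨f, hf_upper, hf_mono⟩
    obtain ⟨i, j, hij, hji⟩ := wellQuasiOrdered_le fun n => UpperSet.mk (f n) (hf_upper n)
    exact (hf_mono hij).not_ge hji
end

section
/- Let L₁, L₂ be lattices with least element 0, let L = L₁ × L₂, and let (fᵢ)_{i∈ℕ} be an admissible operation sequence on L. Then for all n ∈ ℕ and all αⱼ ∈ L₁, βⱼ ∈ L₂ (1 ≤ j ≤ n): fₙ((α₁,β₁),...,(αₙ,βₙ)) = fₙ((α₁,0),...,(αₙ,0)) ∨ fₙ((0,β₁),...,(0,βₙ)). -/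
theorem admissible_on_product (L₁ L₂ : Type) [CompleteLattice L₁] [CompleteLattice L₂]
    (f : OpSeq (L₁ × L₂)) (hf : IsAdmissible f) (n : ℕ)
    (α : Fin (n + 1) → L₁) (β : Fin (n + 1) → L₂) :
    f n (fun i => (α i, β i)) =
      f n (fun i => (α i, ⊥)) ⊔ f n (fun i => (⊥, β i)) := by
  obtain ⟨h1, h2, _, _, h7, _⟩ := hf
  apply le_antisymm
  · have key : ∀ d : ℕ, ∀ γ : Fin (n + 1) → L₁ × L₂,
        (∀ i : Fin (n + 1), (i : ℕ) < n + 1 - d → γ i = (α i, ⊥) ∨ γ i = (⊥, β i)) →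
        (∀ i : Fin (n + 1), n + 1 - d ≤ (i : ℕ) → γ i = (α i, β i)) →
        f n γ ≤ f n (fun i => (α i, ⊥)) ⊔ f n (fun i => (⊥, β i)) := by
      intro d
      induction d with
      | zero =>
        intro γ hpure _
        by_cases hA : ∀ i, γ i = (α i, ⊥)
        · have : γ = fun i => (α i, ⊥) := funext hA
          rw [this]; exact le_sup_left
        · push_neg at hA
          obtain ⟨j, hj⟩ := hA
          have hjB : γ j = (⊥, β j) := (hpure j (by omega)).resolve_left hj
          by_cases hB : ∀ i, γ i = (⊥, β i)
          · have : γ = fun i => (⊥, β i) := funext hB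
            rw [this]; exact le_sup_right
          · push_neg at hB
            obtain ⟨k, hk⟩ := hB
            have hkA : γ k = (α k, ⊥) := (hpure k (by omega)).resolve_right hk
            have l1 : f n γ ≤ γ j := h1 n γ j
            have l2 : f n γ ≤ γ k := h1 n γ k
            rw [hjB] at l1; rw [hkA] at l2
            have : f n γ ≤ (⊥ : L₁ × L₂) := by
              constructor
              · exact l1.1
              · exact l2.2
            exact this.trans bot_le
      | succ d ih =>
        intro γ hpure hmix
        by_cases hd : n + 1 ≤ d
        · exact ih γ (fun i hi => hpure i (by omega)) (fun i hi => hmix i (by omega))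
        · set m : ℕ := n - d with hm
          have hmd : n + 1 - (d + 1) = m := by omega
          have hmd' : n + 1 - d = m + 1 := by omega
          set i₀ : Fin (n + 1) := ⟨m, by omega⟩ with hi₀
          set S : Set (L₁ × L₂) := {(α i₀, ⊥), (⊥, β i₀)} with hS
          have hsup : sSup S = (α i₀, β i₀) := by
            rw [hS, sSup_pair]
            simp [Prod.ext_iff]
          have hγ : γ = Function.update γ i₀ (sSup S) := by
            funext i
            rcases eq_or_ne i i₀ with rfl | hne
            · rw [Function.update_self, hsup, hmix i₀ hmd.le]
            · rw [Function.update_of_ne hne]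
          rw [hγ, h7 n i₀ γ S]
          apply iSup₂_le
          intro b hb
          have hb' : b = (α i₀, ⊥) ∨ b = (⊥, β i₀) := hb
          apply ih
          · intro i hi
            rcases eq_or_ne i i₀ with rfl | hne
            · rw [Function.update_self]; exact hb'
            · rw [Function.update_of_ne hne]
              apply hpure
              rw [hmd]
              rw [hmd'] at hi
              have : (i : ℕ) ≠ m := fun h => hne (Fin.ext h)
              omega
          · intro i hi
            have hne : i ≠ i₀ := by
              intro h; rw [h] at hi; simp [hi₀] at hi; omega
            rw [Function.update_of_ne hne]
            apply hmix
            omega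
    have := key (n + 1) (fun i => (α i, β i))
      (fun i hi => by omega) (fun i _ => rfl)
    exact this
  · apply sup_le
    · exact h2 n _ _ (fun i => ⟨le_refl _, bot_le⟩)
    · exact h2 n _ _ (fun i => ⟨bot_le, le_refl _⟩)
end

section
/- Let L be a finite lattice that does not split, and let n be the number of atoms of L. Then for every admissible operation sequence (fᵢ)_{i∈ℕ} on L and all k ≥ n, fₖ(γ₁,...,γₖ) = 0 for all γ₁,...,γₖ ∈ L. -/
theorem no_split_commutators_vanish (L : Type) [CompleteLattice L] [Finite L]
    (hns : ¬ Splits L) (f : OpSeq L) (hf : IsAdmissible f)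
    (k : ℕ) (hk : Nat.card {a : L // IsAtom a} ≤ k + 1)
    (γ : Fin (k + 1) → L) : f k γ = ⊥ := by
  classical
  obtain ⟨hc1, hc2, hc3, hc4, hc7, hc8⟩ := hf
  -- For every atom `a`, the sup of elements not above `a` is ⊤, else L splits.
  have key : ∀ a : L, IsAtom a → sSup {x : L | ¬ a ≤ x} = ⊤ := by
    intro a ha
    by_contra h
    refine hns ⟨sSup {x : L | ¬ a ≤ x}, a, lt_of_le_of_ne le_top h, ha.1.bot_lt, ?_⟩
    intro α
    by_cases hle : a ≤ α
    · exact Or.inl hle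
    · exact Or.inr (le_sSup hle)
  haveI : Fintype L := Fintype.ofFinite L
  haveI : Fintype {a : L // IsAtom a} := Fintype.ofFinite _
  obtain ⟨g⟩ : Nonempty ({a : L // IsAtom a} ↪ Fin (k + 1)) := by
    apply Function.Embedding.nonempty_of_card_le
    simpa [Nat.card_eq_fintype_card] using hk
  have base : ∀ α : Fin (k + 1) → L,
      (∀ a : {a : L // IsAtom a}, ¬ a.1 ≤ α (g a)) → f k α = ⊥ := by
    intro α hα
    rcases eq_bot_or_exists_atom_le (f k α) with h | ⟨a, ha, hle⟩
    · exact h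
    · exact absurd (hle.trans (hc1 k α (g ⟨a, ha⟩))) (hα ⟨a, ha⟩)
  have main : ∀ t : Finset {a : L // IsAtom a}, ∀ α : Fin (k + 1) → L,
      (∀ a : {a : L // IsAtom a}, a ∉ t → ¬ a.1 ≤ α (g a)) → f k α = ⊥ := by
    intro t
    induction t using Finset.induction_on with
    | empty =>
      intro α hα
      exact base α fun a => hα a (Finset.notMem_empty a)
    | @insert a t hat ih =>
      intro α hα
      have h1 : f k α ≤ f k (Function.update α (g a) ⊤) := by
        apply hc2
        intro j
        rcases eq_or_ne j (g a) with rfl | hj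
        · simp
        · simp [Function.update_of_ne hj]
      have h2 : f k (Function.update α (g a) ⊤) = ⊥ := by
        rw [← key a.1 a.2, hc7 k (g a) α _]
        refine le_bot_iff.1 (iSup_le fun b => iSup_le fun hb => ?_)
        rw [ih (Function.update α (g a) b) ?_]
        intro a' ha'
        rcases eq_or_ne a' a with rfl | hne
        · simpa using hb
        · rw [Function.update_of_ne (fun h => hne (g.injective h))]
          exact hα a' (by simp [hne, ha'])
      exact le_bot_iff.1 (h1.trans_eq h2)
  exact main Finset.univ γ fun a h => absurd (Finset.mem_univ a) h
end

section
/- Let L be a finite lattice and let S be the set of all admissible operation sequences on L, ordered by (fᵢ) ⊑ (gᵢ) iff fᵢ(α₁,...,αᵢ) ≤ gᵢ(α₁,...,αᵢ) for all i and all αⱼ. Then S is at most countable, and (S, ⊑) has no infinite descending chains and no infinite antichains. -/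
/-!
By (HC3) and (HC4), the value `F n α` of an admissible sequence depends only on the count vector
`a ↦ #{i | α i = a}` of its arguments, and antitonely so. Hence `F` is determined by its
superlevel sets, one lower set of `ℕ^L` for each `ℓ ∈ L`, and `F ⊑ G` exactly when each
superlevel set of `F` is contained in the corresponding one of `G`. A lower set of `ℕ^L` is a
finite union of boxes with corners in `(ℕ ∪ {∞})^L`; this makes the lower sets countable and, by
Higman's and Dickson's lemmas, well-quasi-ordered by inclusion. So `⊑` is a well-quasi-order on
admissible sequences: no infinite antichains, and a chain `F₀ ⊒ F₁ ⊒ ⋯` must have `F_i ⊑ F_j` for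
some `i < j`, forcing `F_{i+1} = F_i`.
-/

open Finset

section LowerSetsOfNatPi

variable {ι : Type*} [Finite ι]

theorem ENat.exists_natCast_le_of_le_sSup {s : Set ℕ∞} (hs : s.Nonempty) {n : ℕ}
    (h : (n : ℕ∞) ≤ sSup s) : ∃ x ∈ s, (n : ℕ∞) ≤ x := by
  cases n with
  | zero => obtain ⟨x, hx⟩ := hs; exact ⟨x, hx, bot_le⟩
  | succ n =>
    obtain ⟨x, hx, hnx⟩ := lt_sSup_iff.1 ((ENat.natCast_lt_natCast.2 n.lt_succ_self).trans_le h)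
    exact ⟨x, hx, by push_cast; exact Order.add_one_le_of_lt hnx⟩

theorem DirectedOn.exists_natCast_comp_le_of_le_sSup {C : Set (ι → ℕ∞)}
    (hC : DirectedOn (· ≤ ·) C) (hne : C.Nonempty) {v : ι → ℕ}
    (hv : (↑) ∘ v ≤ sSup C) : ∃ c ∈ C, (↑) ∘ v ≤ c := by
  have := Fintype.ofFinite ι
  have := hne.to_subtype
  have hcoord : ∀ i, ∃ c : C, (v i : ℕ∞) ≤ c.1 i := fun i => by
    obtain ⟨_, ⟨c, hc, rfl⟩, hle⟩ := ENat.exists_natCast_le_of_le_sSup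
      (hne.image (Function.eval i))
      (by simpa only [sSup_apply_eq_sSup_image, Function.comp_apply] using hv i)
    exact ⟨⟨c, hc⟩, hle⟩
  choose c hc using hcoord
  obtain ⟨z, hz⟩ := (directedOn_iff_directed.1 hC).finset_le (univ.image c)
  exact ⟨z, z.2, fun i => (hc i).trans (hz (c i) (mem_image_of_mem c (mem_univ i)) i)⟩

/-- The corners are the maximal `c` whose box lies in `D`: an antichain of the wqo `ι → ℕ∞`,
hence finite. Zorn's lemma puts every point of `D` under one of them, since a box inside the
supremum of a chain of corners lies inside a single one. -/
theorem LowerSet.exists_finset_corners (D : LowerSet (ι → ℕ)) :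
    ∃ s : Finset (ι → ℕ∞), ∀ v, v ∈ D ↔ ∃ c ∈ s, (↑) ∘ v ≤ c := by
  set T : Set (ι → ℕ∞) := {c | ∀ v : ι → ℕ, (↑) ∘ v ≤ c → v ∈ D}
  have hmax : {c | Maximal (· ∈ T) c}.Finite :=
    IsAntichain.finite_of_wellQuasiOrdered (fun c hc d hd hne hle => hne (hc.eq_of_le hd.1 hle))
      wellQuasiOrdered_le
  have hchain : ∀ C ⊆ T, IsChain (· ≤ ·) C → ∀ c ∈ C, ∃ ub ∈ T, ∀ z ∈ C, z ≤ ub :=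
    fun C hCT hC c hc => ⟨sSup C, fun w hw => by
      obtain ⟨c', hc', hwc'⟩ := hC.directedOn.exists_natCast_comp_le_of_le_sSup ⟨c, hc⟩ hw
      exact hCT hc' w hwc', fun z hz => le_sSup hz⟩
  refine ⟨hmax.toFinset, fun v => ⟨fun hv => ?_, ?_⟩⟩
  · obtain ⟨m, hvm, hm⟩ := zorn_le_nonempty₀ T hchain _
      fun w hw => D.lower (fun i => ENat.natCast_le_natCast.1 (hw i)) hv
    exact ⟨m, hmax.mem_toFinset.2 hm, hvm⟩
  · rintro ⟨m, hm, hvm⟩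
    exact (hmax.mem_toFinset.1 hm).1 v hvm

theorem List.SublistForall₂.exists_mem_of_mem {α β : Type*} {r : α → β → Prop}
    {l₁ : List α} {l₂ : List β} (h : List.SublistForall₂ r l₁ l₂) {a : α} (ha : a ∈ l₁) :
    ∃ b ∈ l₂, r a b := by
  induction h with
  | nil => simp at ha
  | cons hab _ ih =>
    rcases List.mem_cons.1 ha with rfl | ha
    · exact ⟨_, List.mem_cons_self, hab⟩
    · obtain ⟨b, hb, hab⟩ := ih ha
      exact ⟨b, List.mem_cons_of_mem _ hb, hab⟩
  | cons_right _ ih =>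
    obtain ⟨b, hb, hab⟩ := ih ha
    exact ⟨b, List.mem_cons_of_mem _ hb, hab⟩

theorem Finset.wellQuasiOrdered_forall_exists_le {α : Type*} [Preorder α]
    [WellQuasiOrderedLE α] : WellQuasiOrdered fun s t : Finset α => ∀ a ∈ s, ∃ b ∈ t, a ≤ b := by
  intro s
  have hHigman := (Set.partiallyWellOrderedOn_univ_iff.2 (wellQuasiOrdered_le (α := α)))
    |>.partiallyWellOrderedOn_sublistForall₂ (· ≤ ·)
  obtain ⟨m, n, hmn, h⟩ :=
    hHigman.exists_lt (f := fun k => (s k).toList) fun _ _ _ => Set.mem_univ _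
  refine ⟨m, n, hmn, fun a ha => ?_⟩
  obtain ⟨b, hb, hab⟩ := h.exists_mem_of_mem (mem_toList.2 ha)
  exact ⟨b, mem_toList.1 hb, hab⟩

instance LowerSet.wellQuasiOrderedLE_pi_nat : WellQuasiOrderedLE (LowerSet (ι → ℕ)) := by
  refine ⟨fun D => ?_⟩
  choose s hs using fun k => (D k).exists_finset_corners
  obtain ⟨m, n, hmn, hle⟩ := Finset.wellQuasiOrdered_forall_exists_le s
  refine ⟨m, n, hmn, fun v hv => ?_⟩
  obtain ⟨c, hc, hvc⟩ := (hs m v).1 hv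
  obtain ⟨c', hc', hcc'⟩ := hle c hc
  exact (hs n v).2 ⟨c', hc', hvc.trans hcc'⟩

instance LowerSet.countable_pi_nat : Countable (LowerSet (ι → ℕ)) := by
  choose s hs using fun D : LowerSet (ι → ℕ) => D.exists_finset_corners
  exact Function.Injective.countable (f := s) fun D E h =>
    SetLike.ext fun v => by rw [hs D, hs E, h]

end LowerSetsOfNatPi

section TupleCount

variable {L : Type*} [DecidableEq L] {n : ℕ}

def tupleCount (α : Fin n → L) (a : L) : ℕ := #{i | α i = a}

theorem tupleCount_comp_perm (α : Fin n → L) (σ : Equiv.Perm (Fin n)) :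
    tupleCount (α ∘ σ) = tupleCount α :=
  funext fun _ => card_equiv σ (by simp)

theorem sum_tupleCount [Fintype L] (α : Fin n → L) : ∑ a, tupleCount α a = n := by
  simp only [tupleCount]
  rw [← card_eq_sum_card_fiberwise (fun i _ => mem_univ (α i)), card_univ, Fintype.card_fin]

theorem tupleCount_eq_tail_add (α : Fin (n + 1) → L) (a : L) :
    tupleCount α a = tupleCount (Fin.tail α) a + if α 0 = a then 1 else 0 := by
  rw [tupleCount, tupleCount, card_filter, card_filter, Fin.sum_univ_succ, add_comm]
  rfl

theorem exists_perm_of_tupleCount_eq {α β : Fin n → L} (h : tupleCount α = tupleCount β) :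
    ∃ σ : Equiv.Perm (Fin n), α = β ∘ σ := by
  have e : ∀ a, {i // α i = a} ≃ {i // β i = a} := fun a =>
    Fintype.equivOfCardEq (by simp only [Fintype.card_subtype]; exact congrFun h a)
  refine ⟨(Equiv.sigmaFiberEquiv α).symm.trans
    ((Equiv.sigmaCongrRight e).trans (Equiv.sigmaFiberEquiv β)), funext fun i => ?_⟩
  exact ((e (α i)) ⟨i, rfl⟩).2.symm

theorem exists_perm_apply_zero_eq_of_tupleCount_pos {α : Fin (n + 1) → L} {a : L}
    (h : 0 < tupleCount α a) :
    ∃ σ : Equiv.Perm (Fin (n + 1)), α (σ 0) = a := by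
  obtain ⟨i, hi⟩ := card_pos.1 h
  exact ⟨Equiv.swap 0 i, by simpa using hi⟩

end TupleCount

section Admissible

variable {L : Type} [CompleteLattice L] {F : OpSeq L}

theorem IsAdmissible.apply_le_tail (hF : IsAdmissible F) {n : ℕ} (α : Fin (n + 2) → L) :
    F (n + 1) α ≤ F n (Fin.tail α) :=
  hF.2.2.1 n α

theorem IsAdmissible.apply_comp_perm (hF : IsAdmissible F) {n : ℕ} (α : Fin (n + 1) → L)
    (σ : Equiv.Perm (Fin (n + 1))) : F n (α ∘ σ) = F n α :=
  hF.2.2.2.1 n α σ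

variable [DecidableEq L] [Fintype L]

theorem IsAdmissible.apply_le_of_tupleCount_le (hF : IsAdmissible F) {m n : ℕ}
    (β : Fin (m + 1) → L) (α : Fin (n + 1) → L) (h : tupleCount α ≤ tupleCount β) :
    F m β ≤ F n α := by
  induction m using Nat.strong_induction_on generalizing n with
  | _ m ih =>
    have hsum : ∑ a, tupleCount α a ≤ ∑ a, tupleCount β a := sum_le_sum fun a _ => h a
    rw [sum_tupleCount, sum_tupleCount] at hsum
    obtain hnm | hnm := (Nat.succ_le_succ_iff.1 hsum).eq_or_lt
    · subst hnm
      have heq : tupleCount α = tupleCount β := funext fun a =>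
        (sum_eq_sum_iff_of_le fun a _ => h a).1 (by rw [sum_tupleCount, sum_tupleCount]) a
          (mem_univ a)
      obtain ⟨σ, rfl⟩ := exists_perm_of_tupleCount_eq heq
      exact (hF.apply_comp_perm β σ).ge
    · -- Move to the front an entry of `β` that `α` has fewer copies of (HC4), then drop it (HC3).
      obtain ⟨k, rfl⟩ : ∃ k, m = k + 1 := ⟨m - 1, by omega⟩
      obtain ⟨a, -, ha⟩ := exists_lt_of_sum_lt (s := univ) (f := tupleCount α)
        (g := tupleCount β) (by rw [sum_tupleCount, sum_tupleCount]; omega)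
      obtain ⟨σ, hσ⟩ := exists_perm_apply_zero_eq_of_tupleCount_pos (pos_of_gt ha)
      have htail : tupleCount α ≤ tupleCount (Fin.tail (β ∘ σ)) := fun b => by
        have := tupleCount_eq_tail_add (β ∘ σ) b
        rw [tupleCount_comp_perm, Function.comp_apply, hσ] at this
        split_ifs at this with hab
        · subst hab; rw [this] at ha; exact Nat.lt_succ_iff.1 ha
        · exact (h b).trans this.le
      calc F (k + 1) β = F (k + 1) (β ∘ σ) := (hF.apply_comp_perm β σ).symm
        _ ≤ F k (Fin.tail (β ∘ σ)) := hF.apply_le_tail _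
        _ ≤ F n α := ih k k.lt_succ_self _ α htail

end Admissible

section Superlevel

variable {L : Type} [CompleteLattice L] [DecidableEq L]

def OpSeq.superlevel (F : OpSeq L) (ℓ : L) : LowerSet (L → ℕ) :=
  lowerClosure {v | ∃ n, ∃ α : Fin (n + 1) → L, tupleCount α = v ∧ ℓ ≤ F n α}

theorem OpSeq.superlevel_le_superlevel_iff [Fintype L] {F G : OpSeq L} (hG : IsAdmissible G) :
    F.superlevel ≤ G.superlevel ↔ ∀ n (α : Fin (n + 1) → L), F n α ≤ G n α := by
  refine ⟨fun h n α => ?_, fun h ℓ => lowerClosure_mono ?_⟩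
  · obtain ⟨_, ⟨m, β, rfl, hβ⟩, hle⟩ :=
      mem_lowerClosure.1 (h (F n α) (subset_lowerClosure ⟨n, α, rfl, le_rfl⟩))
    exact hβ.trans (hG.apply_le_of_tupleCount_le β α hle)
  · rintro _ ⟨n, α, rfl, hℓ⟩
    exact ⟨n, α, rfl, hℓ.trans (h n α)⟩

end Superlevel

theorem partiallyWellOrderedOn_admissible {L : Type} [CompleteLattice L] [Finite L] :
    {F : OpSeq L | IsAdmissible F}.PartiallyWellOrderedOn
      fun F G => ∀ n (α : Fin (n + 1) → L), F n α ≤ G n α := by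
  classical
  have := Fintype.ofFinite L
  refine Set.partiallyWellOrderedOn_iff_exists_lt.2 fun F hF => ?_
  obtain ⟨m, n, hmn, hle⟩ := wellQuasiOrdered_le fun k => (F k).superlevel
  exact ⟨m, n, hmn, (OpSeq.superlevel_le_superlevel_iff (hF n)).1 hle⟩

theorem countable_admissible {L : Type} [CompleteLattice L] [Finite L] :
    {F : OpSeq L | IsAdmissible F}.Countable := by
  classical
  have := Fintype.ofFinite L
  refine (Set.mapsTo_univ OpSeq.superlevel _).countable_of_injOn (fun F hF G hG hFG => ?_)
    Set.countable_univ
  exact funext₂ fun n α => le_antisymm ((OpSeq.superlevel_le_superlevel_iff hG).1 hFG.le n α)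
    ((OpSeq.superlevel_le_superlevel_iff hF).1 hFG.ge n α)

theorem admissible_countable_dcc_no_infinite_antichain (L : Type) [CompleteLattice L]
    [Finite L] :
    {F : OpSeq L | IsAdmissible F}.Countable ∧
    (¬ ∃ f : ℕ → OpSeq L, (∀ i, IsAdmissible (f i)) ∧
        (∀ i n (α : Fin (n + 1) → L), f (i + 1) n α ≤ f i n α) ∧
        (∀ i, f (i + 1) ≠ f i)) ∧
    (∀ C : Set (OpSeq L), (∀ F ∈ C, IsAdmissible F) →
      IsAntichain (fun F G : OpSeq L => ∀ n (α : Fin (n + 1) → L), F n α ≤ G n α) C →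
      C.Finite) := by
  refine ⟨countable_admissible, ?_, fun C hC hC' =>
    hC'.finite_of_partiallyWellOrderedOn (partiallyWellOrderedOn_admissible.mono hC)⟩
  rintro ⟨f, hf, hdesc, hne⟩
  obtain ⟨i, j, hij, hle⟩ := partiallyWellOrderedOn_admissible.exists_lt hf
  refine hne i (funext₂ fun n α => le_antisymm (hdesc i n α) ?_)
  exact (hle n α).trans (antitone_nat_of_succ_le (f := (f · n α)) (hdesc · n α) hij)
end

section
/- With notation as above (finite lattice L with elements α₁,...,αₘ, admissible sequences F and G, and sets R_F(α), R_G(α)): F ⊑ G if and only if R_G(α) ⊆ R_F(α) for all α ∈ L. -/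
/-- The list consisting of `e 1` repeated `a 1` times, ..., `e m` repeated `a m` times. -/
def repList {L : Type} (m : ℕ) (e : Fin m → L) (a : Fin m → ℕ) : List L :=
  (List.ofFn fun i => List.replicate (a i) (e i)).flatten

/-- `E(F, a) = f_{a₁ + ⋯ + aₘ}(e 1, …, e 1, …, e m, …, e m)` (with multiplicities `a`);
by convention `⊥` for `a = 0`. -/
def Efun {L : Type} [CompleteLattice L] (m : ℕ) (F : OpSeq L)
    (e : Fin m → L) (a : Fin m → ℕ) : L :=
  if h : (repList m e a).length = 0 then ⊥
  else F ((repList m e a).length - 1)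
    (fun i => (repList m e a).get (Fin.cast (by omega) i))

/-! A symmetric operation `f_n(β)` depends only on the multiset of the `βᵢ`, and since `e` is
surjective every nonempty multiset over `L` is the one listed by `repList e a` for some `a ≠ 0`.
So every value `f_n(β)` is `E(F, a)` for an `a` that does not depend on `F`, and `F ⊑ G`
amounts to `E(F, a) ≤ E(G, a)` for all `a ≠ 0`; taking `α = E(G, a)` shows this is the
reverse inclusion `R_G(α) ⊆ R_F(α)`. -/

open scoped List

theorem List.Perm.exists_comp_perm_of_ofFn {α : Type*} {n : ℕ} {f g : Fin n → α}
    (h : List.ofFn f ~ List.ofFn g) : ∃ σ : Equiv.Perm (Fin n), f ∘ σ = g := by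
  -- sorting both tuples for some linear order on `α` yields the same tuple
  let : LinearOrder α := IsWellOrder.linearOrder WellOrderingRel
  refine ⟨(Tuple.sort g).symm.trans (Tuple.sort f), ?_⟩
  have hsorted : f ∘ Tuple.sort f = g ∘ Tuple.sort g :=
    List.ofFn_injective <| List.Perm.eq_of_sortedLE (Tuple.monotone_sort f).sortedLE_ofFn
      (Tuple.monotone_sort g).sortedLE_ofFn
      (((Tuple.sort f).ofFn_comp_perm f).trans h |>.trans ((Tuple.sort g).ofFn_comp_perm g).symm)
  funext i
  simpa using congrFun hsorted ((Tuple.sort g).symm i)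

def OpSeq.IsSymmetric {L : Type} (F : OpSeq L) : Prop :=
  ∀ n (α : Fin (n + 1) → L) (π : Equiv.Perm (Fin (n + 1))), F n (α ∘ π) = F n α

theorem IsAdmissible.isSymmetric {L : Type} [CompleteLattice L] {F : OpSeq L}
    (hF : IsAdmissible F) : F.IsSymmetric :=
  hF.2.2.2.1

theorem OpSeq.IsSymmetric.apply_eq_of_perm {L : Type} {F : OpSeq L} (hF : F.IsSymmetric)
    {n : ℕ} {γ β : Fin (n + 1) → L} (h : List.ofFn γ ~ List.ofFn β) : F n γ = F n β := by
  obtain ⟨σ, rfl⟩ := h.exists_comp_perm_of_ofFn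
  exact (hF n γ σ).symm

section repList

variable {L : Type} {m : ℕ}

theorem repList_map {L' : Type} (f : L → L') (e : Fin m → L) (a : Fin m → ℕ) :
    (repList m e a).map f = repList m (f ∘ e) a := by
  simp [repList, List.map_flatten, List.map_ofFn, Function.comp_def]

theorem repList_id_count_perm (l : List (Fin m)) :
    repList m id (fun i => l.count i) ~ l := by
  rw [List.perm_iff_count]
  intro i
  simp [repList, List.count_flatten, List.count_replicate, List.sum_ofFn]

theorem exists_repList_perm {e : Fin m → L} (he : Function.Surjective e) (l : List L) :
    ∃ a, repList m e a ~ l := by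
  refine ⟨fun i => (l.map (Function.surjInv he)).count i, ?_⟩
  have := (repList_id_count_perm (l.map (Function.surjInv he))).map e
  rwa [repList_map, List.map_map, Function.comp_surjInv he, List.map_id] at this

end repList

theorem OpSeq.apply_congr {L : Type} (F : OpSeq L) {n n' : ℕ} (hn : n = n')
    {γ : Fin (n + 1) → L} {γ' : Fin (n' + 1) → L}
    (hγ : ∀ i, γ i = γ' (Fin.cast (by omega) i)) :
    F n γ = F n' γ' := by
  subst hn
  exact congrArg (F n) (funext hγ)

section Efun

variable {L : Type} [CompleteLattice L] {m : ℕ} {e : Fin m → L}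

theorem Efun_eq_of_repList_eq_ofFn (F : OpSeq L) {a : Fin m → ℕ} {n : ℕ}
    {γ : Fin (n + 1) → L} (h : repList m e a = List.ofFn γ) : Efun m F e a = F n γ := by
  have hlen : (repList m e a).length = n + 1 := by simp [h]
  rw [Efun, dif_neg (by omega)]
  exact F.apply_congr (by omega) fun i => by
    simp only [List.get_eq_getElem, h, List.getElem_ofFn]
    rfl

theorem Efun_mono {F G : OpSeq L} (hFG : ∀ n β, F n β ≤ G n β) (a : Fin m → ℕ) :
    Efun m F e a ≤ Efun m G e a := by
  unfold Efun
  split_ifs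
  · exact le_rfl
  · exact hFG _ _

theorem exists_Efun_eq_apply (he : Function.Surjective e) {n : ℕ} (β : Fin (n + 1) → L) :
    ∃ a ≠ 0, ∀ F : OpSeq L, F.IsSymmetric → Efun m F e a = F n β := by
  obtain ⟨a, ha⟩ := exists_repList_perm he (List.ofFn β)
  have hlen : (repList m e a).length = n + 1 := by simp [ha.length_eq]
  set γ : Fin (n + 1) → L := fun i => (repList m e a)[i.val]
  have hγ : repList m e a = List.ofFn γ := List.ext_getElem (by simp [hlen]) fun i _ _ => by
    rw [List.getElem_ofFn]
  refine ⟨a, ?_, fun F hF => ?_⟩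
  · rintro rfl
    simp [repList] at hlen
  · rw [Efun_eq_of_repList_eq_ofFn F hγ]
    exact hF.apply_eq_of_perm (hγ ▸ ha)

end Efun

theorem sqsubseteq_iff_RF_reverse_inclusion_general (L : Type) [CompleteLattice L]
    (m : ℕ) (e : Fin m → L) (he : Function.Surjective e)
    (F G : OpSeq L) (hF : IsAdmissible F) (hG : IsAdmissible G) :
    (∀ n (β : Fin (n + 1) → L), F n β ≤ G n β) ↔
      ∀ α : L, {a : Fin m → ℕ | a ≠ 0 ∧ Efun m G e a ≤ α} ⊆
        {a : Fin m → ℕ | a ≠ 0 ∧ Efun m F e a ≤ α} := by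
  constructor
  · rintro hFG α a ⟨ha, hGa⟩
    exact ⟨ha, (Efun_mono hFG a).trans hGa⟩
  · intro hR n β
    obtain ⟨a, ha, hEfun⟩ := exists_Efun_eq_apply he β
    have hGa : a ∈ {a : Fin m → ℕ | a ≠ 0 ∧ Efun m G e a ≤ G n β} :=
      ⟨ha, (hEfun G hG.isSymmetric).le⟩
    rw [← hEfun F hF.isSymmetric]
    exact (hR _ hGa).2

theorem sqsubseteq_iff_RF_reverse_inclusion (L : Type) [CompleteLattice L] [Finite L]
    (m : ℕ) (e : Fin m → L) (he : Function.Surjective e)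
    (F G : OpSeq L) (hF : IsAdmissible F) (hG : IsAdmissible G) :
    (∀ n (β : Fin (n + 1) → L), F n β ≤ G n β) ↔
      ∀ α : L, {a : Fin m → ℕ | a ≠ 0 ∧ Efun m G e a ≤ α} ⊆
        {a : Fin m → ℕ | a ≠ 0 ∧ Efun m F e a ≤ α} :=
  sqsubseteq_iff_RF_reverse_inclusion_general L m e he F G hF hG
end
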